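/- For k > 0 and n ≥ 0, the identity (x+k)^2 L_n^{(k)}(x) = (n+1) L̂_{n+2}^k(x) - 2(n+k) L̂_{n+1}^k(x) + (n+k-1) L̂_n^k(x) holds, where L̂_m^k = m L_m^{(k)} - 2(m+k)L_{m-1}^{(k)} + (m+k)L_{m-2}^{(k)} (with L̂_0^k interpreted via the same formula). -/

import Mathlib

open Polynomial

/-- Classical generalized Laguerre polynomials L_n^{(k)}, defined by the
three-term recurrence (n+2) L_{n+2} = (2n+k+3 - x) L_{n+1} - (n+1+k) L_n,
with L_0 = 1, L_1 = k + 1 - x. -/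
noncomputable def genLaguerre (k : ℝ) : ℕ → Polynomial ℝ
  | 0 => 1
  | 1 => Polynomial.C (k + 1) - Polynomial.X
  | n + 2 =>
      Polynomial.C (1 / ((n : ℝ) + 2)) *
        ((Polynomial.C (2 * (n : ℝ) + k + 3) - Polynomial.X) * genLaguerre k (n + 1)
          - Polynomial.C ((n : ℝ) + 1 + k) * genLaguerre k n)

/-- Laguerre polynomial with integer index, zero for negative index. -/
noncomputable def lagZ (k : ℝ) (m : ℤ) : Polynomial ℝ :=
  if 0 ≤ m then genLaguerre k m.toNat else 0

/-- X₁-Laguerre polynomial expressed via the linear combination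
L̂_m^k = m L_m^{(k)} - 2(m+k) L_{m-1}^{(k)} + (m+k) L_{m-2}^{(k)},
interpreted with L of negative index equal to 0 (this also defines L̂_0^k). -/
noncomputable def hatL2 (k : ℝ) (m : ℕ) : Polynomial ℝ :=
  Polynomial.C (m : ℝ) * lagZ k m
    - Polynomial.C (2 * ((m : ℝ) + k)) * lagZ k ((m : ℤ) - 1)
    + Polynomial.C ((m : ℝ) + k) * lagZ k ((m : ℤ) - 2)

/-!
Write `L_m = 0` for `m < 0`. Then the three-term recurrence
`x L_m = (2m+k+1) L_m - (m+1) L_{m+1} - (m+k) L_{m-1}` holds for every integer `m`, and so does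
the identity, with `L̂_m` given by the same formula for all `m ∈ ℤ`. After expanding `L̂`,
the difference of the two sides is the combination
`(x + 2n + 3k + 1)·(rec. at n) - (n+1)·(rec. at n+1) - (n+k)·(rec. at n-1)` of recurrences.
-/

lemma lagZ_natCast (k : ℝ) (m : ℕ) : lagZ k m = genLaguerre k m := by
  simp [lagZ]

lemma lagZ_of_neg (k : ℝ) {m : ℤ} (hm : m < 0) : lagZ k m = 0 := by
  simp [lagZ, not_le.mpr hm]

lemma natCast_add_two_mul_genLaguerre_add_two (k : ℝ) (t : ℕ) :
    C ((t : ℝ) + 2) * genLaguerre k (t + 2) =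
      (C (2 * (t : ℝ) + k + 3) - X) * genLaguerre k (t + 1)
        - C ((t : ℝ) + 1 + k) * genLaguerre k t := by
  have ht : (t : ℝ) + 2 ≠ 0 := by positivity
  rw [genLaguerre, ← mul_assoc, ← C_mul, mul_one_div_cancel ht, C_1, one_mul]

lemma X_mul_lagZ (k : ℝ) (m : ℤ) :
    X * lagZ k m =
      C (2 * (m : ℝ) + k + 1) * lagZ k m - C ((m : ℝ) + 1) * lagZ k (m + 1)
        - C ((m : ℝ) + k) * lagZ k (m - 1) := by
  obtain hm | rfl | rfl | ⟨t, rfl⟩ :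
      m < -1 ∨ m = -1 ∨ m = 0 ∨ ∃ t : ℕ, m = t + 1 := by
    rcases lt_trichotomy m 0 with hm | rfl | hm
    · omega
    · simp
    · exact .inr <| .inr <| .inr ⟨(m - 1).toNat, by omega⟩
  · rw [lagZ_of_neg k (by omega : m < 0), lagZ_of_neg k (by omega : m + 1 < 0),
      lagZ_of_neg k (by omega : m - 1 < 0)]
    simp
  · norm_num [lagZ, genLaguerre]
  · norm_num [lagZ, genLaguerre]
  · have h := natCast_add_two_mul_genLaguerre_add_two k t
    rw [show (t : ℤ) + 1 + 1 = ((t + 2 : ℕ) : ℤ) by push_cast; ring,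
      show (t : ℤ) + 1 - 1 = t by ring, show (t : ℤ) + 1 = ((t + 1 : ℕ) : ℤ) by push_cast; ring,
      lagZ_natCast, lagZ_natCast, lagZ_natCast]
    push_cast
    simp only [map_add, map_mul, map_one, map_ofNat] at h ⊢
    linear_combination h

noncomputable def hatLagZ (k : ℝ) (m : ℤ) : ℝ[X] :=
  C (m : ℝ) * lagZ k m - C (2 * ((m : ℝ) + k)) * lagZ k (m - 1)
    + C ((m : ℝ) + k) * lagZ k (m - 2)

lemma hatL2_eq_hatLagZ (k : ℝ) (m : ℕ) : hatL2 k m = hatLagZ k m := by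
  simp [hatL2, hatLagZ]

theorem sq_X_add_C_mul_lagZ (k : ℝ) (n : ℤ) :
    (X + C k) ^ 2 * lagZ k n =
      C ((n : ℝ) + 1) * hatLagZ k (n + 2) - C (2 * ((n : ℝ) + k)) * hatLagZ k (n + 1)
        + C ((n : ℝ) + k - 1) * hatLagZ k n := by
  have e₀ := X_mul_lagZ k n
  have e₁ := X_mul_lagZ k (n + 1)
  have e₂ := X_mul_lagZ k (n - 1)
  rw [show n + 1 + 1 = n + 2 by ring, add_sub_cancel_right] at e₁
  rw [sub_add_cancel, show n - 1 - 1 = n - 2 by ring] at e₂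
  rw [hatLagZ, hatLagZ, hatLagZ, show n + 2 - 1 = n + 1 by ring, add_sub_cancel_right,
    add_sub_cancel_right, show n + 1 - 2 = n - 1 by ring]
  push_cast at e₀ e₁ e₂ ⊢
  simp only [map_add, map_sub, map_mul, map_one, map_ofNat] at e₀ e₁ e₂ ⊢
  linear_combination (X + 2 * C (n : ℝ) + 3 * C k + 1) * e₀
    - (C (n : ℝ) + 1) * e₁ - (C (n : ℝ) + C k) * e₂

theorem stmt_13_general (k : ℝ) (n : ℕ) :
    (Polynomial.X + Polynomial.C k) ^ 2 * genLaguerre k n =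
      Polynomial.C ((n : ℝ) + 1) * hatL2 k (n + 2)
        - Polynomial.C (2 * ((n : ℝ) + k)) * hatL2 k (n + 1)
        + Polynomial.C ((n : ℝ) + k - 1) * hatL2 k n := by
  rw [← lagZ_natCast, hatL2_eq_hatLagZ, hatL2_eq_hatLagZ, hatL2_eq_hatLagZ]
  exact_mod_cast sq_X_add_C_mul_lagZ k n

/-- For k > 0 and n ≥ 0,
(x+k)² L_n^{(k)} = (n+1) L̂_{n+2}^k - 2(n+k) L̂_{n+1}^k + (n+k-1) L̂_n^k. -/
theorem stmt_13 (k : ℝ) (hk : 0 < k) (n : ℕ) :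
    (Polynomial.X + Polynomial.C k) ^ 2 * genLaguerre k n =
      Polynomial.C ((n : ℝ) + 1) * hatL2 k (n + 2)
        - Polynomial.C (2 * ((n : ℝ) + k)) * hatL2 k (n + 1)
        + Polynomial.C ((n : ℝ) + k - 1) * hatL2 k n :=
  stmt_13_general k n
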